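/- Let c : H⊗H → H be a Laplace pairing which is normalized (c(x⊗1) = ε(x)·1 = c(1⊗x)) and conormalized (ε(c(x⊗y)) = ε(x)ε(y)), and let # = c⋆m be the circle (hash) product x # y = c(x₍₁₎⊗y₍₁₎)·(x₍₂₎y₍₂₎). Then (H, #, η, Δ, ε) is a bialgebra — that is, Δ∘# = (#⊗#)∘(id⊗sw⊗id)∘(Δ⊗Δ) and ε(x # y) = ε(x)ε(y) — if and only if c satisfies condition (e): Δ∘c = (c⊗c)∘(id⊗sw⊗id)∘(Δ⊗Δ). -/

import Mathlib

open TensorProduct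

noncomputable section

variable (R H : Type*) [CommRing R] [CommRing H] [HopfAlgebra R H]

/-- The comultiplication on `H ⊗ H`: `Δ₂ = (id ⊗ sw ⊗ id) ∘ (Δ ⊗ Δ)`. -/
def comul2 : H ⊗[R] H →ₗ[R] (H ⊗[R] H) ⊗[R] (H ⊗[R] H) :=
  (TensorProduct.tensorTensorTensorComm R H H H H).toLinearMap ∘ₗ
    TensorProduct.map Coalgebra.comul Coalgebra.comul

/-- The counit on `H ⊗ H`: `ε₂(x ⊗ y) = ε(x)ε(y)`. -/
def counit2 : H ⊗[R] H →ₗ[R] R :=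
  LinearMap.mul' R R ∘ₗ TensorProduct.map Coalgebra.counit Coalgebra.counit

/-- Convolution product `f ⋆ g = m ∘ (f ⊗ g) ∘ Δ₂` on `Hom_R(H ⊗ H, H)`. -/
def conv2 (f g : H ⊗[R] H →ₗ[R] H) : H ⊗[R] H →ₗ[R] H :=
  LinearMap.mul' R H ∘ₗ TensorProduct.map f g ∘ₗ comul2 R H

/-- `a` is a Laplace pairing: `a(x ⊗ yz) = a(x₍₁₎⊗y)·a(x₍₂₎⊗z)` and
`a(xy ⊗ z) = a(x⊗z₍₁₎)·a(y⊗z₍₂₎)`. -/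
def IsLaplace (a : H ⊗[R] H →ₗ[R] H) : Prop :=
  (a ∘ₗ TensorProduct.map LinearMap.id (LinearMap.mul' R H) =
    LinearMap.mul' R H ∘ₗ TensorProduct.map a a ∘ₗ
      (TensorProduct.tensorTensorTensorComm R H H H H).toLinearMap ∘ₗ
      TensorProduct.map Coalgebra.comul LinearMap.id) ∧
  (a ∘ₗ TensorProduct.map (LinearMap.mul' R H) LinearMap.id =
    LinearMap.mul' R H ∘ₗ TensorProduct.map a a ∘ₗ
      (TensorProduct.tensorTensorTensorComm R H H H H).toLinearMap ∘ₗ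
      TensorProduct.map LinearMap.id Coalgebra.comul)

/-- Condition (e): `Δ ∘ c = (c ⊗ c) ∘ (id ⊗ sw ⊗ id) ∘ (Δ ⊗ Δ)`. -/
def CondE (a : H ⊗[R] H →ₗ[R] H) : Prop :=
  Coalgebra.comul ∘ₗ a = TensorProduct.map a a ∘ₗ comul2 R H

/-!
Since `H` is cocommutative, `Δ : H → H ⊗ H` is a coalgebra map, and so is `m : H ⊗ H → H`;
hence the convolution `f ⋆ g = m ∘ (f ⊗ g) ∘ Δ₂` of two coalgebra maps `H ⊗ H → H` is again a
coalgebra map. Condition (e) together with conormalization says exactly that `c` is a coalgebra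
map, so `# = c ⋆ m` is one. Conversely, `m ∘ (S ⊗ S)` is a coalgebra map (the antipode of a
cocommutative Hopf algebra is one) and the convolution inverse of `m`, so
`c = # ⋆ (m ∘ (S ⊗ S))` is a coalgebra map as soon as `#` is.
-/

open Coalgebra Bialgebra HopfAlgebra WithConv

section
variable {R H : Type*} [CommSemiring R] [Semiring H] [HopfAlgebra R H] [IsCocomm R H]

theorem HopfAlgebra.comul_comp_antipode :
    comul ∘ₗ antipode R = TensorProduct.map (antipode R) (antipode R) ∘ₗ comul (A := H) := by
  -- Both sides are convolution inverses of `Δ`; for the right one because `Δ` is a coalgebra map.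
  have hleft : toConv (TensorProduct.map (antipode R) (antipode R) ∘ₗ comul (A := H)) *
      toConv (comul (R := R)) = 1 := by
    calc _ = toConv ((toConv (TensorProduct.map (antipode R) (antipode R)) *
          toConv (TensorProduct.map (LinearMap.id : H →ₗ[R] H) LinearMap.id) :
            WithConv (H ⊗[R] H →ₗ[R] H ⊗[R] H)).ofConv ∘ₗ
            (comulCoalgHom R H).toLinearMap) := by
          rw [LinearMap.convMul_comp_coalgHom_distrib, TensorProduct.map_id]; rfl
      _ = toConv ((1 : WithConv (H ⊗[R] H →ₗ[R] H ⊗[R] H)).ofConv ∘ₗ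
            (comulCoalgHom R H).toLinearMap) := by
          rw [TensorProduct.map_convMul_map, LinearMap.antipode_mul_id]
          congr 2
          ext a b
          simp [Algebra.algebraMap_eq_smul_one, Algebra.TensorProduct.one_def,
            TensorProduct.smul_tmul', TensorProduct.tmul_smul, smul_smul, mul_comm]
      _ = 1 := by rw [LinearMap.convOne_comp_coalgHom]
  exact congr(ofConv $(left_inv_eq_right_inv hleft LinearMap.comul_right_inv)).symm

variable (R H) in
def HopfAlgebra.antipodeCoalgHom : H →ₗc[R] H where
  toLinearMap := antipode R
  counit_comp := counit_comp_antipode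
  map_comp_comul := comul_comp_antipode.symm

end

section
variable {R C A : Type*} [CommSemiring R] [AddCommMonoid C] [Module R C] [Coalgebra R C]
  [IsCocomm R C] [Semiring A] [Bialgebra R A]

def CoalgHom.convMul (f g : C →ₗc[R] A) : C →ₗc[R] A :=
  (mulCoalgHom R A).comp ((Coalgebra.TensorProduct.map f g).comp (comulCoalgHom R C))

theorem CoalgHom.toLinearMap_convMul (f g : C →ₗc[R] A) :
    (f.convMul g : C →ₗ[R] A) = (toConv (f : C →ₗ[R] A) * toConv (g : C →ₗ[R] A)).ofConv :=
  rfl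

end

theorem HopfAlgebra.mul_convMul_mul_comp_map_antipode {R H : Type*} [CommSemiring R]
    [CommSemiring H] [HopfAlgebra R H] :
    toConv (LinearMap.mul' R H) *
      toConv (LinearMap.mul' R H ∘ₗ TensorProduct.map (antipode R) (antipode R)) = 1 := by
  have hS : LinearMap.mul' R H ∘ₗ TensorProduct.map (antipode R) (antipode R) =
      antipode R ∘ₗ LinearMap.mul' R H := by
    rw [← antipode_comp_mul_comp_comm]
    ext a b
    simp [mul_comm]
  calc _ = toConv ((toConv LinearMap.id * toConv (antipode R) : WithConv (H →ₗ[R] H)).ofConv ∘ₗ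
        (mulCoalgHom R H).toLinearMap) := by
        rw [LinearMap.convMul_comp_coalgHom_distrib, hS]; rfl
    _ = 1 := by rw [LinearMap.id_mul_antipode, LinearMap.convOne_comp_coalgHom]

theorem counit2_eq_counit : counit2 R H = counit := by
  ext x y
  simp [counit2, mul_comm]

theorem condE_and_counit_iff_exists_coalgHom (f : H ⊗[R] H →ₗ[R] H) :
    (CondE R H f ∧ counit ∘ₗ f = counit2 R H) ↔
      ∃ F : H ⊗[R] H →ₗc[R] H, (F : H ⊗[R] H →ₗ[R] H) = f := by
  constructor
  · rintro ⟨hΔ, hε⟩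
    exact ⟨{ toLinearMap := f
             counit_comp := hε.trans (counit2_eq_counit R H)
             map_comp_comul := hΔ.symm }, rfl⟩
  · rintro ⟨F, rfl⟩
    exact ⟨F.map_comp_comul.symm, F.counit_comp.trans (counit2_eq_counit R H).symm⟩

theorem hash_bialgebra_iff_condE
    (hcoc : (TensorProduct.comm R H H).toLinearMap ∘ₗ Coalgebra.comul
      = (Coalgebra.comul : H →ₗ[R] H ⊗[R] H))
    (c : H ⊗[R] H →ₗ[R] H)
    (hconorm : ∀ x y : H, Coalgebra.counit (c (x ⊗ₜ[R] y))
      = (Coalgebra.counit x : R) * Coalgebra.counit y) :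
    (Coalgebra.comul ∘ₗ conv2 R H c (LinearMap.mul' R H)
        = TensorProduct.map (conv2 R H c (LinearMap.mul' R H))
            (conv2 R H c (LinearMap.mul' R H)) ∘ₗ comul2 R H ∧
      Coalgebra.counit ∘ₗ conv2 R H c (LinearMap.mul' R H) = counit2 R H) ↔
    CondE R H c := by
  have : IsCocomm R H := ⟨hcoc⟩
  have hcounit : counit ∘ₗ c = counit2 R H := TensorProduct.ext' fun x y => by simp [hconorm, counit2]
  constructor
  · intro hhash
    obtain ⟨F, hF⟩ := (condE_and_counit_iff_exists_coalgHom R H _).1 hhash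
    let mS := (mulCoalgHom R H).comp
      (Coalgebra.TensorProduct.map (antipodeCoalgHom R H) (antipodeCoalgHom R H))
    refine ((condE_and_counit_iff_exists_coalgHom R H c).2 ⟨F.convMul mS, ?_⟩).1
    rw [CoalgHom.toLinearMap_convMul, hF]
    change (toConv c * toConv (LinearMap.mul' R H) * toConv (LinearMap.mul' R H ∘ₗ
      TensorProduct.map (antipode R) (antipode R))).ofConv = c
    rw [mul_assoc, mul_convMul_mul_comp_map_antipode, mul_one, ofConv_toConv]
  · intro hE
    obtain ⟨F, hF⟩ := (condE_and_counit_iff_exists_coalgHom R H c).1 ⟨hE, hcounit⟩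
    exact (condE_and_counit_iff_exists_coalgHom R H _).2
      ⟨F.convMul (mulCoalgHom R H), by rw [CoalgHom.toLinearMap_convMul, hF]; rfl⟩
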